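/- arXiv:1812.00872 — 4 statements merged into one kernel-verified Lean document; each statement's English description precedes it below -/
import Mathlib

section
/- Let u,γ > 0 and ν₀,ν₁ ∈ (0,1) with ν₀+ν₁=1, and let F(y) = −γy³ + (2γ+s)y² − (γ+s+u)y + uν₁. If u < s or γ < s, then F has exactly one root in the interval [0,1]. -/
theorem stmt6 (s γ u ν₀ ν₁ : ℝ) (hγ : 0 < γ) (hu : 0 < u)
    (h0 : ν₀ ∈ Set.Ioo (0:ℝ) 1) (h1 : ν₁ ∈ Set.Ioo (0:ℝ) 1)
    (hsum : ν₀ + ν₁ = 1) (hcase : u < s ∨ γ < s) :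
    ∃! y, y ∈ Set.Icc (0:ℝ) 1 ∧
      -γ*y^3 + (2*γ+s)*y^2 - (γ+s+u)*y + u*ν₁ = 0 := by
  obtain ⟨hν₀, hν₀'⟩ := h0
  obtain ⟨hν₁, hν₁'⟩ := h1
  -- uniqueness core: any two roots in [0,1] coincide
  have key : ∀ a b : ℝ, a ∈ Set.Icc (0:ℝ) 1 → b ∈ Set.Icc (0:ℝ) 1 →
      -γ*a^3 + (2*γ+s)*a^2 - (γ+s+u)*a + u*ν₁ = 0 →
      -γ*b^3 + (2*γ+s)*b^2 - (γ+s+u)*b + u*ν₁ = 0 → a = b := by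
    intro a b ha hb hFa hFb
    by_contra hab
    obtain ⟨ha0, ha1⟩ := ha
    obtain ⟨hb0, hb1⟩ := hb
    -- strict bounds for a and b
    have ha0' : 0 < a := by
      rcases lt_or_eq_of_le ha0 with h | h; · exact h
      exfalso; rw [← h] at hFa; nlinarith
    have ha1' : a < 1 := by
      rcases lt_or_eq_of_le ha1 with h | h; · exact h
      exfalso; rw [h] at hFa; nlinarith
    have hb0' : 0 < b := by
      rcases lt_or_eq_of_le hb0 with h | h; · exact h
      exfalso; rw [← h] at hFb; nlinarith
    have hb1' : b < 1 := by
      rcases lt_or_eq_of_le hb1 with h | h; · exact h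
      exfalso; rw [h] at hFb; nlinarith
    -- divided difference
    have hdiff : -γ*(a^2+a*b+b^2) + (2*γ+s)*(a+b) - (γ+s+u) = 0 := by
      have h : (a-b) * (-γ*(a^2+a*b+b^2) + (2*γ+s)*(a+b) - (γ+s+u)) = 0 := by
        linear_combination hFa - hFb
      rcases mul_eq_zero.1 h with h' | h'
      · exact absurd (sub_eq_zero.1 h') hab
      · exact h'
    -- third root
    obtain ⟨c, hc⟩ : ∃ c : ℝ, γ * c = 2*γ + s - γ*(a+b) :=
      ⟨(2*γ + s - γ*(a+b))/γ, by field_simp⟩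
    have e3eq : γ*(a*b*c) = u*ν₁ := by
      have h : γ*(a*b*c) = a*b*(γ*c) := by ring
      rw [h, hc]; linear_combination a*hdiff - hFa
    have e2eq : γ*(a*b+a*c+b*c) = γ + s + u := by
      have h : γ*(a*b+a*c+b*c) = γ*(a*b) + (a+b)*(γ*c) := by ring
      rw [h, hc]; linear_combination hdiff
    have hgab : 0 < γ*(a*b) := by positivity
    have hc0 : 0 < c := by nlinarith [e3eq, mul_pos hu hν₁, hgab]
    have hone : γ*((1-a)*(1-b)*(1-c)) = u*ν₀ := by
      linear_combination -hc + e2eq - e3eq - u*hsum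
    have hgab1 : 0 < γ*((1-a)*(1-b)) := by
      have := mul_pos (sub_pos.2 ha1') (sub_pos.2 hb1'); positivity
    have hc1 : c < 1 := by nlinarith [hone, mul_pos hu hν₀, hgab1]
    rcases hcase with hs | hs
    · -- u < s but γ*Σ(1-x)(1-y) = u - s > 0
      nlinarith [mul_pos (sub_pos.2 ha1') (sub_pos.2 hb1'),
        mul_pos (sub_pos.2 hb1') (sub_pos.2 hc1),
        mul_pos (sub_pos.2 ha1') (sub_pos.2 hc1)]
    · -- γ < s but γ*(3-(a+b+c)) = γ - s > 0
      nlinarith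
  -- existence via IVT
  have hcont : ContinuousOn (fun y : ℝ => -γ*y^3 + (2*γ+s)*y^2 - (γ+s+u)*y + u*ν₁)
      (Set.Icc (0:ℝ) 1) := by
    apply Continuous.continuousOn; fun_prop
  have hsum' : u*ν₀ + u*ν₁ = u := by linear_combination u*hsum
  have hmem : (0:ℝ) ∈ Set.Icc (-γ*(1:ℝ)^3 + (2*γ+s)*(1:ℝ)^2 - (γ+s+u)*1 + u*ν₁)
      (-γ*(0:ℝ)^3 + (2*γ+s)*(0:ℝ)^2 - (γ+s+u)*0 + u*ν₁) := by
    constructor <;> nlinarith [mul_pos hu hν₀, mul_pos hu hν₁, hsum']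
  obtain ⟨y, hy, hfy⟩ := intermediate_value_Icc' (by norm_num : (0:ℝ) ≤ 1) hcont hmem
  exact ⟨y, ⟨hy, hfy⟩, fun z hz => key z y hz.1 hy hz.2 hfy⟩
end

section
/- Let s > 0, γ = 0, u ≥ 0 with u ≠ s·y₀ and y₀ ∈ [0,1), y₀ ≠ u/s, and let y(·;y₀) solve y′ = −s·y(1−y) + u(1−y), y(0)=y₀. Then exp(−s∫₀ʳ (1−y(ξ;y₀)) dξ) = (u − s·y(r;y₀))/(u − s·y₀) for all r ≥ 0; consequently the ancestral type distribution is g_r(y₀) = y₀·(u − s·y(r;y₀))/(u − s·y₀). -/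
open MeasureTheory Set intervalIntegral

theorem stmt15 (s u y₀ : ℝ) (hs : 0 < s) (hu : 0 ≤ u)
    (hy₀ : y₀ ∈ Set.Ico (0:ℝ) 1) (hne : y₀ ≠ u/s) (hne' : u ≠ s*y₀)
    (y : ℝ → ℝ) (hy0 : y 0 = y₀)
    (hode : ∀ t : ℝ, 0 ≤ t →
      HasDerivAt y (-s*(y t)*(1 - y t) + u*(1 - y t)) t) :
    ∀ r : ℝ, 0 ≤ r →
      Real.exp (-(s * ∫ ξ in (0:ℝ)..r, (1 - y ξ))) = (u - s*y r)/(u - s*y₀) ∧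
      y₀ * Real.exp (-(s * ∫ ξ in (0:ℝ)..r, (1 - y ξ))) =
        y₀ * (u - s*y r)/(u - s*y₀) := by
  have hcontAt : ∀ t : ℝ, 0 ≤ t → ContinuousAt y t := fun t ht => (hode t ht).continuousAt
  intro r hr
  set G : ℝ → ℝ := fun t => ∫ ξ in (0:ℝ)..t, (1 - y ξ) with hG
  set F : ℝ → ℝ := fun t => (u - s * y t) * Real.exp (s * G t) with hF
  have hconty : ∀ x : ℝ, 0 ≤ x → ContinuousOn (fun ξ => 1 - y ξ) (Set.Icc 0 x) := by
    intro x hx t ht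
    exact (continuousAt_const.sub (hcontAt t ht.1)).continuousWithinAt
  have hint : ∀ x : ℝ, 0 ≤ x → IntervalIntegrable (fun ξ => 1 - y ξ) volume 0 x := by
    intro x hx
    apply ContinuousOn.intervalIntegrable
    rw [Set.uIcc_of_le hx]
    exact hconty x hx
  -- continuity of F on [0, r]
  have hGcont : ContinuousOn G (Set.Icc 0 r) := by
    have := intervalIntegral.continuousOn_primitive_interval
      (f := fun ξ => 1 - y ξ) (μ := volume) (a := (0:ℝ)) (b := r)
      (by
        rw [Set.uIcc_of_le hr]
        exact (hconty r hr).integrableOn_compact isCompact_Icc)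
    rwa [Set.uIcc_of_le hr] at this
  have hFcont : ContinuousOn F (Set.Icc 0 r) := by
    apply ContinuousOn.mul
    · exact continuousOn_const.sub (continuousOn_const.mul
        (fun t ht => (hcontAt t ht.1).continuousWithinAt))
    · exact (continuousOn_const.mul hGcont).rexp
  have hFderiv : ∀ x ∈ Set.Ico 0 r, HasDerivWithinAt F 0 (Set.Ici x) x := by
    intro x hx
    have hy' : HasDerivWithinAt y (-s*(y x)*(1 - y x) + u*(1 - y x)) (Set.Ici x) x :=
      (hode x hx.1).hasDerivWithinAt
    have hmeas : StronglyMeasurableAtFilter (fun ξ => 1 - y ξ) (nhdsWithin x (Set.Ioi x)) :=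
      ⟨Set.Ioi x, self_mem_nhdsWithin,
        (ContinuousOn.aestronglyMeasurable
          (fun t ht => (continuousAt_const.sub (hcontAt t (le_trans hx.1 (le_of_lt ht)))).continuousWithinAt)
          measurableSet_Ioi)⟩
    have hGd : HasDerivWithinAt G (1 - y x) (Set.Ici x) x :=
      intervalIntegral.integral_hasDerivWithinAt_right (s := Set.Ici x) (t := Set.Ioi x)
        (hint x hx.1) hmeas
        ((continuousAt_const.sub (hcontAt x hx.1)).continuousWithinAt)
    have h1 : HasDerivWithinAt (fun t => u - s * y t)
        (-(s * (-s*(y x)*(1 - y x) + u*(1 - y x)))) (Set.Ici x) x :=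
      (hy'.const_mul s).const_sub u
    have h2 : HasDerivWithinAt (fun t => Real.exp (s * G t))
        (Real.exp (s * G x) * (s * (1 - y x))) (Set.Ici x) x :=
      (hGd.const_mul s).exp
    have : HasDerivWithinAt (fun t => (u - s * y t) * Real.exp (s * G t)) _ (Set.Ici x) x := h1.mul h2
    convert this using 1
    ring
  have key : ∀ x ∈ Set.Icc 0 r, F x = F 0 :=
    constant_of_has_deriv_right_zero hFcont hFderiv
  have hFr : F r = F 0 := key r ⟨hr, le_refl r⟩
  have hF0 : F 0 = u - s * y₀ := by
    simp [hF, hG, hy0]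
  have hEne : Real.exp (s * G r) ≠ 0 := Real.exp_ne_zero _
  have hden : u - s * y₀ ≠ 0 := sub_ne_zero.mpr hne'
  have hmain : Real.exp (-(s * G r)) = (u - s*y r)/(u - s*y₀) := by
    rw [Real.exp_neg]
    have : (u - s * y r) * Real.exp (s * G r) = u - s * y₀ := by
      rw [← hF0, ← hFr]
    field_simp
    linarith [this]
  exact ⟨hmain, by rw [mul_div_assoc, hmain]⟩
end

section
/- Let γ > 0, s > 0, u > (s+γ)²/(4γ) (so σ := (1+s/γ)² − 4u/γ < 0) and ν₀ = 0, and let y(·;y₀) solve the mutation–selection ODE with y₀ ∈ [0,1]. Then the map t ↦ y(t;y₀) is non-decreasing and converges to 1 as t → ∞. -/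
open Set Filter

lemma hasDerivAt_maxsq (x : ℝ) :
    HasDerivAt (fun x : ℝ => (max x 0)^2) (2 * max x 0) x := by
  rcases lt_trichotomy x 0 with hx | rfl | hx
  · have h0 : (fun x : ℝ => (max x 0)^2) =ᶠ[nhds x] fun _ => (0:ℝ) := by
      filter_upwards [Iio_mem_nhds hx] with z hz
      simp [max_eq_right (le_of_lt (mem_Iio.mp hz))]
    have : HasDerivAt (fun x : ℝ => (max x 0)^2) 0 x :=
      (hasDerivAt_const x (0:ℝ)).congr_of_eventuallyEq h0
    simpa [max_eq_right hx.le] using this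
  · rw [hasDerivAt_iff_tendsto_slope]
    have h1 : Tendsto (fun h : ℝ => max h 0) (nhdsWithin 0 {(0:ℝ)}ᶜ) (nhds 0) := by
      have : Tendsto (fun h : ℝ => max h 0) (nhds 0) (nhds (max 0 0)) :=
        (continuous_id.max continuous_const).tendsto 0
      simpa using this.mono_left nhdsWithin_le_nhds
    simp only [max_self, mul_zero]
    refine h1.congr' ?_
    filter_upwards [self_mem_nhdsWithin] with h hh
    have hne : h ≠ 0 := hh
    rcases le_or_gt h 0 with h0 | h0
    · simp [slope, max_eq_right h0]
    · simp only [slope_def_field, max_eq_left h0.le, max_self]; rw [eq_div_iff (by simpa using hne)]; ring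
  · have h0 : (fun x : ℝ => (max x 0)^2) =ᶠ[nhds x] fun z => z^2 := by
      filter_upwards [Ioi_mem_nhds hx] with z hz
      simp [max_eq_left (le_of_lt (mem_Ioi.mp hz))]
    have : HasDerivAt (fun x : ℝ => (max x 0)^2) (2*x) x := by
      simpa [mul_comm] using (hasDerivAt_pow 2 x).congr_of_eventuallyEq h0
    simpa [max_eq_left hx.le] using this

theorem stmt16 (s γ u y₀ : ℝ) (hs : 0 < s) (hγ : 0 < γ)
    (hu : (s+γ)^2/(4*γ) < u) (hy₀ : y₀ ∈ Set.Icc (0:ℝ) 1)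
    (y : ℝ → ℝ) (hy0 : y 0 = y₀)
    (hode : ∀ t : ℝ, 0 ≤ t →
      HasDerivAt y (-(y t)*(1 - y t)*(s + γ*(1 - y t)) + u*(1 - y t)) t) :
    MonotoneOn y (Set.Ici 0) ∧
    Filter.Tendsto y Filter.atTop (nhds 1) := by
  set F : ℝ → ℝ := fun x => -x*(1 - x)*(s + γ*(1 - x)) + u*(1 - x) with hFdef
  have hu' : (s+γ)^2 < u * (4*γ) := (div_lt_iff₀ (by positivity)).mp hu
  have hG : ∀ x : ℝ, 0 < γ*x^2 - (s+γ)*x + u := by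
    intro x
    nlinarith [sq_nonneg (2*γ*x - (s+γ)), hγ.le]
  have hFfac : ∀ x : ℝ, F x = (1 - x) * (γ*x^2 - (s+γ)*x + u) := by
    intro x; simp only [hFdef]; ring
  have hodeF : ∀ t, 0 ≤ t → HasDerivAt y (F (y t)) t := by
    intro t ht
    have h := hode t ht
    have he : -(y t)*(1 - y t)*(s + γ*(1 - y t)) + u*(1 - y t) = F (y t) := by
      simp only [hFdef]
    rwa [he] at h
  have hcont : ContinuousOn y (Ici 0) := fun t ht =>
    ((hodeF t ht).continuousAt).continuousWithinAt
  -- invariance: y t ≤ 1 for t ≥ 0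
  set w : ℝ → ℝ := fun t => (max (y t - 1) 0)^2 with hwdef
  have hw : ∀ t, 0 ≤ t → HasDerivAt w (2 * max (y t - 1) 0 * F (y t)) t := by
    intro t ht
    have := (hasDerivAt_maxsq (y t - 1)).comp t ((hodeF t ht).sub_const 1)
    simpa [hwdef, Function.comp_def] using this
  have hwanti : AntitoneOn w (Ici 0) := by
    apply antitoneOn_of_deriv_nonpos (convex_Ici 0)
    · exact fun t ht => ((hw t ht).continuousAt).continuousWithinAt

    · intro t ht
      rw [interior_Ici] at ht
      exact ((hw t (le_of_lt ht)).differentiableAt).differentiableWithinAt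
    · intro t ht
      rw [interior_Ici] at ht
      rw [(hw t (le_of_lt ht)).deriv]
      rcases le_or_gt (y t) 1 with h1 | h1
      · simp [max_eq_right (by linarith : y t - 1 ≤ 0)]
      · have hF : F (y t) < 0 := by
          rw [hFfac]
          exact mul_neg_of_neg_of_pos (by linarith) (hG (y t))
        have : (0:ℝ) ≤ 2 * max (y t - 1) 0 := by positivity
        exact mul_nonpos_of_nonneg_of_nonpos this hF.le
  have hle1 : ∀ t, 0 ≤ t → y t ≤ 1 := by
    intro t ht
    have hw0 : w 0 = 0 := by
      simp [hwdef, hy0, max_eq_right (by linarith [hy₀.2] : y₀ - 1 ≤ 0)]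
    have := hwanti (self_mem_Ici) ht ht
    rw [hw0] at this
    have hnn : 0 ≤ w t := by positivity
    have hwt : w t = 0 := le_antisymm this hnn
    have hm : max (y t - 1) 0 = 0 := by
      have h2 : (max (y t - 1) 0)^2 = 0 := hwt
      exact sq_eq_zero_iff.mp h2
    have := le_max_left (y t - 1) 0
    rw [hm] at this
    linarith
  have hFnonneg : ∀ t, 0 ≤ t → 0 ≤ F (y t) := by
    intro t ht
    rw [hFfac]
    exact mul_nonneg (by linarith [hle1 t ht]) (hG (y t)).le
  have hmono : MonotoneOn y (Ici 0) := by
    apply monotoneOn_of_deriv_nonneg (convex_Ici 0) hcont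
    · intro t ht
      rw [interior_Ici] at ht
      exact ((hodeF t (le_of_lt ht)).differentiableAt).differentiableWithinAt
    · intro t ht
      rw [interior_Ici] at ht
      rw [(hodeF t (le_of_lt ht)).deriv]
      exact hFnonneg t (le_of_lt ht)
  refine ⟨hmono, ?_⟩
  -- convergence
  set z : ℝ → ℝ := fun t => y (max t 0) with hzdef
  have hzmono : Monotone z := fun a b hab =>
    hmono (le_max_right a 0) (le_max_right b 0) (max_le_max hab le_rfl)
  have hzbdd : BddAbove (Set.range z) := by
    refine ⟨1, ?_⟩
    rintro _ ⟨t, rfl⟩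
    exact hle1 _ (le_max_right t 0)
  set L : ℝ := ⨆ t, z t with hLdef
  have hzL : Tendsto z atTop (nhds L) := tendsto_atTop_ciSup hzmono hzbdd
  have hyL : Tendsto y atTop (nhds L) := by
    refine hzL.congr' ?_
    filter_upwards [eventually_ge_atTop (0:ℝ)] with t ht
    simp [hzdef, max_eq_left ht]
  have hL1 : L ≤ 1 := ciSup_le fun t => hle1 _ (le_max_right t 0)
  have hyleL : ∀ t, 0 ≤ t → y t ≤ L := by
    intro t ht
    have h := le_ciSup hzbdd t
    simpa [hzdef, max_eq_left ht] using h
  have hLeq : L = 1 := by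
    by_contra hne
    have hL : L < 1 := lt_of_le_of_ne hL1 hne
    have hFL : 0 < F L := by
      rw [hFfac]
      exact mul_pos (by linarith) (hG L)
    have hFcont : Continuous F := by
      rw [hFdef]; fun_prop
    have hFy : Tendsto (fun t => F (y t)) atTop (nhds (F L)) :=
      (hFcont.tendsto L).comp hyL
    have hev : ∀ᶠ t in atTop, F L / 2 < F (y t) :=
      hFy.eventually (eventually_gt_nhds (half_lt_self hFL))
    obtain ⟨T₀, hT₀⟩ := (hev.and (eventually_ge_atTop (0:ℝ))).exists_forall_of_atTop
    set T := max T₀ 0 with hT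
    have hT0 : (0:ℝ) ≤ T := le_max_right _ _
    have hTub : ∀ t, T ≤ t → F L / 2 < F (y t) ∧ 0 ≤ t := by
      intro t htT
      exact hT₀ t (le_trans (le_max_left _ _) htT)
    -- g t = y t - (F L / 2) * t monotone on Ici T
    have hg : MonotoneOn (fun t => y t - (F L / 2) * t) (Ici T) := by
      apply monotoneOn_of_deriv_nonneg (convex_Ici T)
      · exact ContinuousOn.sub
          (hcont.mono (fun x hx => le_trans hT0 hx))
          ((continuous_const.mul continuous_id).continuousOn)
      · intro t ht
        rw [interior_Ici] at ht
        have ht0 : (0:ℝ) ≤ t := le_trans hT0 (le_of_lt ht)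
        exact (((hodeF t ht0).sub ((hasDerivAt_id t).const_mul (F L / 2))).differentiableAt).differentiableWithinAt
      · intro t ht
        rw [interior_Ici] at ht
        have ht0 : (0:ℝ) ≤ t := le_trans hT0 (le_of_lt ht)
        have hd : HasDerivAt (fun t => y t - (F L / 2) * t) (F (y t) - F L / 2) t := by
          have h := (hodeF t ht0).sub ((hasDerivAt_id t).const_mul (F L / 2)); rw [mul_one] at h; exact h
        rw [hd.deriv]
        have := (hTub t (le_of_lt ht)).1
        linarith
    set t₁ : ℝ := T + 6 / F L with ht₁
    have hTt₁ : T ≤ t₁ := by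
      have h6 : 0 < 6 / F L := by positivity
      rw [ht₁]
      linarith
    have := hg self_mem_Ici (mem_Ici.mpr hTt₁) hTt₁
    have hyT : 0 ≤ y T := by
      have := hmono self_mem_Ici (mem_Ici.mpr hT0) hT0
      rw [hy0] at this
      linarith [hy₀.1]
    have hcalc : y T + (F L / 2) * (6 / F L) ≤ y t₁ := by
      simp only [ht₁] at this ⊢
      linarith [this]
    have h3 : (F L / 2) * (6 / F L) = 3 := by
      field_simp
      ring
    rw [h3] at hcalc
    have := hle1 t₁ (le_trans hT0 hTt₁)
    linarith
  rwa [hLeq] at hyL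
end

section
/- Let s,γ > 0, u > 0, ν₀ = 0, and suppose u < s (regime u < û). Then the solution y(t;y₀) of y′ = (y−1)(−γy² + (s+γ)y − u), y(0) = y₀, satisfies: lim_{t→∞} y(t;y₀) = ȳ₂ for all y₀ ∈ [0,1), and y(t;1) ≡ 1, where ȳ₂ = (1/2)(1+s/γ − √((1+s/γ)² − 4u/γ)) ∈ (0,1). -/
open Real Filter Set intervalIntegral

lemma expFactor (c g : ℝ → ℝ) (hc : ∀ t : ℝ, 0 ≤ t → ContinuousAt c t)
    (hg : ∀ t : ℝ, 0 ≤ t → HasDerivAt g (c t * g t) t) :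
    ∀ t : ℝ, 0 ≤ t → ∃ e : ℝ, 0 < e ∧ g t = g 0 * e := by
  set c' : ℝ → ℝ := fun t => c (max t 0) with hc'def
  have hc' : Continuous c' := by
    rw [continuous_iff_continuousAt]
    intro t
    have : ContinuousAt (fun x : ℝ => max x 0) t :=
      (continuous_id.max continuous_const).continuousAt
    exact ContinuousAt.comp (hc (max t 0) (le_max_right _ _)) this
  set C : ℝ → ℝ := fun x => ∫ τ in (0:ℝ)..x, c' τ with hCdef
  have hC : ∀ s : ℝ, HasDerivAt C (c' s) s := by
    intro s
    exact integral_hasDerivAt_right (hc'.intervalIntegrable _ _)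
      (hc'.stronglyMeasurable.stronglyMeasurableAtFilter) hc'.continuousAt
  set G : ℝ → ℝ := fun x => g x * Real.exp (-C x) with hGdef
  have hG : ∀ s : ℝ, 0 ≤ s → HasDerivAt G 0 s := by
    intro s hs
    have h1 : HasDerivAt (fun x => Real.exp (-C x)) (Real.exp (-C s) * (-c' s)) s :=
      HasDerivAt.exp (hC s).neg
    have h2 := (hg s hs).mul h1
    have hmax : c' s = c s := by simp [hc'def, max_eq_left hs]
    refine h2.congr_deriv ?_
    rw [hmax]; ring
  intro T hT
  have hGcont : ContinuousOn G (Icc 0 T) := fun x hx =>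
    ((hG x hx.1).continuousAt).continuousWithinAt
  have hconst := constant_of_has_deriv_right_zero hGcont
    (fun x hx => ((hG x hx.1).hasDerivWithinAt))
  have hGT : G T = G 0 := hconst T ⟨hT, le_refl T⟩
  have hC0 : C 0 = 0 := intervalIntegral.integral_same
  refine ⟨Real.exp (C T), Real.exp_pos _, ?_⟩
  have : g T * Real.exp (-C T) = g 0 * Real.exp (-C 0) := hGT
  rw [hC0] at this
  simp only [neg_zero, Real.exp_zero, mul_one] at this
  have hne : Real.exp (-C T) ≠ 0 := (Real.exp_pos _).ne'
  field_simp [Real.exp_neg] at this ⊢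
  rw [← this, mul_assoc, ← Real.exp_add, neg_add_cancel, Real.exp_zero, mul_one]


lemma convUp (f y : ℝ → ℝ) (hf : Continuous f)
    (hy : ∀ t : ℝ, 0 ≤ t → HasDerivAt y (f (y t)) t)
    (L : ℝ) (hb : ∀ t : ℝ, 0 ≤ t → y t < L)
    (hpos' : ∀ t : ℝ, 0 ≤ t → 0 < f (y t))
    (hposl : ∀ x : ℝ, y 0 ≤ x → x < L → 0 < f x) :
    Filter.Tendsto y Filter.atTop (nhds L) := by
  have hycont : ContinuousOn y (Ici 0) := fun t ht =>
    ((hy t ht).continuousAt).continuousWithinAt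
  have hmono : MonotoneOn y (Ici 0) := by
    apply monotoneOn_of_deriv_nonneg (convex_Ici 0) hycont
    · intro t ht
      rw [interior_Ici] at ht
      exact ((hy t ht.le).differentiableAt).differentiableWithinAt
    · intro t ht
      rw [interior_Ici] at ht
      rw [(hy t ht.le).deriv]
      exact (hpos' t ht.le).le
  set S := y '' Ici 0 with hS
  have hSne : S.Nonempty := ⟨y 0, mem_image_of_mem y self_mem_Ici⟩
  have hSbdd : BddAbove S := ⟨L, fun x ⟨t, ht, hxt⟩ => hxt ▸ (hb t ht).le⟩
  set l := sSup S with hl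
  have hylel : ∀ t : ℝ, 0 ≤ t → y t ≤ l := fun t ht =>
    le_csSup hSbdd (mem_image_of_mem y ht)
  have hlleL : l ≤ L := csSup_le hSne (fun x ⟨t, ht, hxt⟩ => hxt ▸ (hb t ht).le)
  have hy0l : y 0 ≤ l := hylel 0 (le_refl 0)
  -- claim l = L
  have hlL : l = L := by
    by_contra hne
    have hlltL : l < L := lt_of_le_of_ne hlleL hne
    have hfl : 0 < f l := hposl l hy0l hlltL
    set m := f l / 2 with hm
    have hmpos : 0 < m := by positivity
    -- continuity of f at l: get δ
    obtain ⟨δ, hδpos, hδ⟩ := Metric.continuousAt_iff.mp hf.continuousAt m hmpos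
    -- get t₀ with y t₀ > l - δ
    obtain ⟨x, ⟨t₀, ht₀, rfl⟩, hx⟩ := exists_lt_of_lt_csSup hSne (by linarith : l - δ < l)
    have hkey : ∀ t : ℝ, t₀ ≤ t → m ≤ f (y t) := by
      intro t ht
      have ht0 : (0:ℝ) ≤ t := le_trans ht₀ ht
      have h1 : y t₀ ≤ y t := hmono ht₀ ht0 ht
      have h2 : y t ≤ l := hylel t ht0
      have hdist : dist (y t) l < δ := by
        rw [Real.dist_eq, abs_lt]; constructor <;> linarith
      have := hδ hdist
      rw [Real.dist_eq, abs_lt] at this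
      linarith [this.1]
    -- w t = y t - m * t is monotone on [t₀, ∞)
    set w : ℝ → ℝ := fun t => y t - m * t with hw
    have hwmono : MonotoneOn w (Ici t₀) := by
      apply monotoneOn_of_deriv_nonneg (convex_Ici t₀)
      · intro t ht
        exact (((hy t (le_trans ht₀ ht)).sub
          ((hasDerivAt_id t).const_mul m)).continuousAt).continuousWithinAt
      · intro t ht
        rw [interior_Ici] at ht
        exact (((hy t (le_trans ht₀ ht.le)).sub
          ((hasDerivAt_id t).const_mul m)).differentiableAt).differentiableWithinAt
      · intro t ht
        rw [interior_Ici] at ht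
        have hd : HasDerivAt w (f (y t) - m * 1) t :=
          (hy t (le_trans ht₀ ht.le)).sub ((hasDerivAt_id t).const_mul m)
        rw [hd.deriv]
        have := hkey t ht.le
        linarith
    set T := t₀ + (L - y t₀) / m + 1 with hT
    have hq : 0 ≤ (L - y t₀) / m := by
      apply div_nonneg _ hmpos.le
      have := hb t₀ ht₀
      linarith
    have hTge : t₀ ≤ T := by rw [hT]; linarith
    have hwle : w t₀ ≤ w T := hwmono (self_mem_Ici) hTge hTge
    have : y t₀ - m * t₀ ≤ y T - m * T := hwle
    have hyT : y T < L := hb T (le_trans ht₀ hTge)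
    have hexp : m * (T - t₀) = (L - y t₀) + m := by
      rw [hT]; field_simp; ring
    nlinarith
  -- now prove tendsto
  rw [Metric.tendsto_atTop]
  intro ε hε
  obtain ⟨x, ⟨t₁, ht₁, rfl⟩, hx⟩ := exists_lt_of_lt_csSup hSne (by linarith : l - ε < l)
  refine ⟨t₁, fun t ht => ?_⟩
  have ht0 : (0:ℝ) ≤ t := le_trans ht₁ ht
  have h1 : y t₁ ≤ y t := hmono ht₁ ht0 ht
  have h2 : y t ≤ l := hylel t ht0
  rw [Real.dist_eq, abs_lt]
  rw [hlL] at hx h2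
  exact ⟨by linarith, by linarith [hb t ht0]⟩


set_option maxHeartbeats 2000000 in
theorem stmt18 (s γ u y₀ : ℝ) (hs : 0 < s) (hγ : 0 < γ) (hu : 0 < u)
    (hus : u < s)
    (y : ℝ → ℝ) (hy0 : y 0 = y₀) (hy₀ : y₀ ∈ Set.Icc (0:ℝ) 1)
    (hode : ∀ t : ℝ, 0 ≤ t →
      HasDerivAt y ((y t - 1)*(-γ*(y t)^2 + (s+γ)*(y t) - u)) t)
    (ybar₂ : ℝ)
    (hbar : ybar₂ = (1/2)*(1 + s/γ - Real.sqrt ((1+s/γ)^2 - 4*u/γ))) :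
    ybar₂ ∈ Set.Ioo (0:ℝ) 1 ∧
    (y₀ ∈ Set.Ico (0:ℝ) 1 → Filter.Tendsto y Filter.atTop (nhds ybar₂)) ∧
    (y₀ = 1 → ∀ t : ℝ, 0 ≤ t → y t = 1) := by
  have ha : (1+s/γ)^2 - 4*u/γ = ((γ+s)^2 - 4*u*γ)/γ^2 := by field_simp
  have hD : 0 < (1+s/γ)^2 - 4*u/γ := by
    rw [ha]
    apply div_pos _ (by positivity)
    nlinarith [sq_nonneg (γ - s)]
  obtain ⟨q, hqdef⟩ : ∃ q, q = Real.sqrt ((1+s/γ)^2 - 4*u/γ) := ⟨_, rfl⟩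
  rw [← hqdef] at hbar
  have hqpos : 0 < q := hqdef ▸ Real.sqrt_pos.mpr hD
  have hq2 : q^2 = (1+s/γ)^2 - 4*u/γ := by rw [hqdef]; exact Real.sq_sqrt hD.le
  have hq2' : γ^2*q^2 = (γ+s)^2 - 4*u*γ := by
    rw [hq2, ha]; field_simp
  obtain ⟨ybar₃, hy3def⟩ : ∃ y3 : ℝ, y3 = (1/2)*(1 + s/γ + q) := ⟨_, rfl⟩
  have hbar' : 2*γ*ybar₂ = (γ + s) - γ*q := by rw [hbar]; field_simp <;> ring
  have hy3' : 2*γ*ybar₃ = (γ + s) + γ*q := by rw [hy3def]; field_simp <;> ring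
  have hγq : 0 < γ * q := by positivity
  have hkey1 : γ*q < γ + s := by
    nlinarith [hq2', mul_pos hγ hu, hγq, (by positivity : (0:ℝ) < γ*q + (γ+s))]
  have hkey2 : (γ - s)^2 < (γ*q)^2 := by
    nlinarith [hq2', mul_pos hγ (sub_pos.mpr hus)]
  have h8 : |γ - s| < γ*q := by
    rw [← Real.sqrt_sq hγq.le, ← Real.sqrt_sq_eq_abs]
    exact Real.sqrt_lt_sqrt (sq_nonneg _) hkey2
  obtain ⟨h8a, h8b⟩ := abs_lt.mp h8
  have hy2pos : 0 < ybar₂ := by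
    by_contra h
    push_neg at h
    have := mul_nonpos_of_nonneg_of_nonpos (by positivity : (0:ℝ) ≤ 2*γ) h
    linarith
  have hy2lt1 : ybar₂ < 1 := by
    by_contra h
    push_neg at h
    have := mul_le_mul_of_nonneg_left h (by positivity : (0:ℝ) ≤ 2*γ)
    linarith
  have hy3gt1 : 1 < ybar₃ := by
    by_contra h
    push_neg at h
    have := mul_le_mul_of_nonneg_left h (by positivity : (0:ℝ) ≤ 2*γ)
    linarith
  have hmul : (2*γ*ybar₂) * (2*γ*ybar₃) = ((γ+s) - γ*q) * ((γ+s) + γ*q) := by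
    rw [hbar', hy3']
  have h2' : γ * (ybar₂ * ybar₃) = u := by
    have h7 : 4*γ*(γ*(ybar₂*ybar₃)) = 4*γ*u := by linear_combination hmul - hq2'
    exact mul_left_cancel₀ (by positivity : (4:ℝ)*γ ≠ 0) h7
  have h1' : γ * (ybar₂ + ybar₃) = γ + s := by
    linear_combination (1/2)*hbar' + (1/2)*hy3'
  have hfact : ∀ x : ℝ, (x-1)*(-γ*x^2+(s+γ)*x-u)
      = (x - ybar₂)*(-γ*(x-1)*(x-ybar₃)) := by
    intro x
    linear_combination (-(x-1)*x)*h1' + (x-1)*h2'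
  -- continuity of y on the right half line
  have hyc : ∀ t : ℝ, 0 ≤ t → ContinuousAt y t := fun t ht => (hode t ht).continuousAt
  -- factored form of the ODE
  have hodef : ∀ t : ℝ, 0 ≤ t →
      HasDerivAt y ((y t - ybar₂)*(-γ*(y t - 1)*(y t - ybar₃))) t :=
    fun t ht => (hfact (y t)) ▸ hode t ht
  -- exponential factorization for the root 1
  have hroot1 : ∀ t : ℝ, 0 ≤ t → ∃ e : ℝ, 0 < e ∧ y t - 1 = (y 0 - 1) * e := by
    have H := expFactor (fun τ => -γ*(y τ)^2 + (s+γ)*(y τ) - u) (fun τ => y τ - 1)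
      (fun t ht => by
        have hct := hyc t ht
        exact (((continuousAt_const.mul (hct.pow 2)).add
          (continuousAt_const.mul hct)).sub continuousAt_const))
      (fun t ht => by
        have h := (hode t ht).sub_const 1
        beta_reduce
        rw [mul_comm (-γ*(y t)^2 + (s+γ)*(y t) - u) (y t - 1)]
        exact h)
    exact fun t ht => H t ht
  -- exponential factorization for the root ybar₂
  have hroot2 : ∀ t : ℝ, 0 ≤ t → ∃ e : ℝ, 0 < e ∧ y t - ybar₂ = (y 0 - ybar₂) * e := by
    have H := expFactor (fun τ => -γ*(y τ - 1)*(y τ - ybar₃)) (fun τ => y τ - ybar₂)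
      (fun t ht => by
        have hct := hyc t ht
        exact ((continuousAt_const.mul (hct.sub continuousAt_const)).mul
          (hct.sub continuousAt_const)))
      (fun t ht => by
        have h := (hodef t ht).sub_const ybar₂
        beta_reduce
        rw [mul_comm (-γ*(y t - 1)*(y t - ybar₃)) (y t - ybar₂)]
        exact h)
    exact fun t ht => H t ht
  refine ⟨⟨hy2pos, hy2lt1⟩, ?_, ?_⟩
  · -- the main convergence claim
    intro hmem
    obtain ⟨h0le, h1lt⟩ := hmem
    have hy0lt1 : y 0 < 1 := by rw [hy0]; exact h1lt
    have hlt1 : ∀ t : ℝ, 0 ≤ t → y t < 1 := by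
      intro t ht
      obtain ⟨e, he, heq⟩ := hroot1 t ht
      nlinarith
    have hfneg : ∀ x : ℝ, ybar₂ < x → x < 1 →
        (x-1)*(-γ*x^2 + (s+γ)*x - u) < 0 := by
      intro x hx1 hx2
      rw [hfact x]
      have hx3 : x < ybar₃ := hx2.trans hy3gt1
      have hp : 0 < γ*(1-x)*(ybar₃-x) := mul_pos (mul_pos hγ (by linarith)) (by linarith)
      nlinarith
    have hfpos : ∀ x : ℝ, x < ybar₂ →
        0 < (x-1)*(-γ*x^2 + (s+γ)*x - u) := by
      intro x hx
      rw [hfact x]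
      have hx2 : x < 1 := hx.trans hy2lt1
      have hx3 : x < ybar₃ := hx2.trans hy3gt1
      have hp : 0 < γ*(1-x)*(ybar₃-x) := mul_pos (mul_pos hγ (by linarith)) (by linarith)
      nlinarith
    rcases lt_trichotomy (y 0) ybar₂ with hc | hc | hc
    · -- increasing case
      have hlt2 : ∀ t : ℝ, 0 ≤ t → y t < ybar₂ := by
        intro t ht
        obtain ⟨e, he, heq⟩ := hroot2 t ht
        nlinarith
      exact convUp (fun x => (x-1)*(-γ*x^2 + (s+γ)*x - u)) y
        (by fun_prop) (fun t ht => hode t ht) ybar₂ hlt2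
        (fun t ht => hfpos (y t) (hlt2 t ht))
        (fun x _ hx => hfpos x hx)
    · -- stationary case
      have heqq : ∀ t : ℝ, 0 ≤ t → y t = ybar₂ := by
        intro t ht
        obtain ⟨e, he, heq⟩ := hroot2 t ht
        rw [hc] at heq
        simp at heq
        linarith
      apply Filter.Tendsto.congr' _ (tendsto_const_nhds : Filter.Tendsto
        (fun _ : ℝ => ybar₂) Filter.atTop (nhds ybar₂))
      filter_upwards [Filter.eventually_ge_atTop (0:ℝ)] with t ht
      exact (heqq t ht).symm
    · -- decreasing case
      have hgt2 : ∀ t : ℝ, 0 ≤ t → ybar₂ < y t := by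
        intro t ht
        obtain ⟨e, he, heq⟩ := hroot2 t ht
        nlinarith
      have H := convUp (fun x => ((-x)-1)*(-γ*(-x)^2 + (s+γ)*(-x) - u) * (-1))
        (fun t => -(y t)) (by fun_prop)
        (fun t ht => by
          have h := (hode t ht).neg
          refine h.congr_deriv ?_
          simp only [neg_neg]
          ring)
        (-ybar₂)
        (fun t ht => by simp only [neg_lt_neg_iff]; exact hgt2 t ht)
        (fun t ht => by
          have := hfneg (y t) (hgt2 t ht) (hlt1 t ht)
          simp only [neg_neg]
          nlinarith)
        (fun x hx1 hx2 => by
          have hx1' : -(y 0) ≤ x := hx1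
          have hw1 : ybar₂ < -x := by linarith
          have hw2 : -x < 1 := by linarith [hy0lt1]
          have := hfneg (-x) hw1 hw2
          beta_reduce
          nlinarith)
      have H2 := H.neg
      simp only [neg_neg] at H2
      exact H2
  · -- the case y₀ = 1
    intro h1 t ht
    obtain ⟨e, he, heq⟩ := hroot1 t ht
    rw [hy0, h1] at heq
    simp at heq
    linarith
end
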